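/- arXiv:1105.3905 — 3 statements merged into one kernel-verified Lean document; each statement's English description precedes it below -/
import Mathlib

section
/- There is a universal constant c > 0 with the following property: for every Schwartz function v on ℝ and every smooth, bounded, nonnegative function w on ℝ with ‖w'‖_{L^∞} ≤ 1, one has ‖w ∂ₓ³v‖_{L²}² ≤ c ( ‖w² ∂ₓ²v‖_{L²} ‖∂ₓ⁴v‖_{L²} + ‖∂ₓ²v‖_{L²}² ). -/
open MeasureTheory Real Complex Filter
open scoped FourierTransform ENNReal

noncomputable section

/-- The Hilbert transform on ℝ, defined via the Fourier transform:
`(𝓗 f)^(ξ) = -i sgn(ξ) f̂(ξ)`. -/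
def hilbertT (f : ℝ → ℂ) : ℝ → ℂ :=
  𝓕⁻ (fun ξ : ℝ => (-Complex.I) * (Real.sign ξ : ℂ) * 𝓕 f ξ)

/-- A real-valued solution of the Benjamin–Ono equation
`∂ₜ u + 𝓗 ∂ₓ² u + u ∂ₓ u = 0`, where `u t x` is the value at time `t`, position `x`. -/
def IsBOSolution (u : ℝ → ℝ → ℝ) : Prop :=
  ∀ t x : ℝ,
    (deriv (fun τ => u τ x) t : ℂ)
      + hilbertT (fun y => (iteratedDeriv 2 (fun z => u t z) y : ℂ)) x
      + (u t x : ℂ) * (deriv (fun y => u t y) x : ℂ) = 0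

/-- The (extended-real) `H^s(ℝ)` Sobolev norm of a function. -/
def hsNorm (s : ℝ) (f : ℝ → ℂ) : ℝ≥0∞ :=
  eLpNorm (fun ξ : ℝ => ((1 + ξ ^ 2) ^ (s / 2) : ℝ) * 𝓕 f ξ) 2 volume

/-- The (extended-real) norm of `f` in `L²(|x|^{2r} dx)`. -/
def wNorm (r : ℝ) (f : ℝ → ℂ) : ℝ≥0∞ :=
  eLpNorm (fun x : ℝ => (|x| ^ r : ℝ) * f x) 2 volume

/-- The norm of the weighted Sobolev space `Z_{s,r} = H^s(ℝ) ∩ L²(|x|^{2r} dx)`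
(it also controls the `L²` norm). -/
def zNorm (s r : ℝ) (f : ℝ → ℂ) : ℝ≥0∞ :=
  hsNorm s f + wNorm r f + eLpNorm f 2 volume

/-- Membership in `Z_{s,r} = H^s(ℝ) ∩ L²(|x|^{2r} dx)` for a real-valued function. -/
def InZ (s r : ℝ) (f : ℝ → ℝ) : Prop :=
  AEStronglyMeasurable f volume ∧ zNorm s r (fun x => (f x : ℂ)) < ⊤

/-- Membership in `Ż_{s,r} = {f ∈ Z_{s,r} : f̂(0) = 0}` for a real-valued function. -/
def InZdot (s r : ℝ) (f : ℝ → ℝ) : Prop :=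
  InZ s r f ∧ 𝓕 (fun x => (f x : ℂ)) 0 = 0

/-- `u ∈ C(ℝ : Z_{s,r})`: membership for all times plus continuity in the `Z_{s,r}` norm. -/
def ContZ (s r : ℝ) (u : ℝ → ℝ → ℝ) : Prop :=
  (∀ t, InZ s r (u t)) ∧
    ∀ t₀ : ℝ, Tendsto (fun t => zNorm s r (fun x => ((u t x : ℂ) - (u t₀ x : ℂ)))) (nhds t₀)
      (nhds 0)

/-- `u ∈ C(ℝ : Ż_{s,r})`. -/
def ContZdot (s r : ℝ) (u : ℝ → ℝ → ℝ) : Prop :=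
  ContZ s r u ∧ ∀ t, 𝓕 (fun x => (u t x : ℂ)) 0 = 0

end

/-- bounded continuous times Schwartz is integrable -/
lemma aux_integrable (φ : ℝ → ℝ) (g : SchwartzMap ℝ ℝ) (hφ : Continuous φ)
    (C : ℝ) (hC : ∀ x, |φ x| ≤ C) :
    Integrable (fun x => φ x * g x) volume :=
  g.integrable.bdd_mul hφ.aestronglyMeasurable (Filter.Eventually.of_forall fun x => by simpa using hC x)

lemma aux_memL2 (φ : ℝ → ℝ) (g : SchwartzMap ℝ ℝ) (hφ : Continuous φ)
    (C : ℝ) (hC : ∀ x, |φ x| ≤ C) :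
    MemLp (fun x => φ x * g x) 2 volume := by
  rw [memLp_two_iff_integrable_sq (f := fun x => φ x * g x) ((hφ.mul g.continuous).aestronglyMeasurable)]
  have h : (fun x => (φ x * g x) ^ 2) = fun x => (φ x ^ 2 * g x) * g x := by
    funext x; ring
  rw [h]
  refine aux_integrable _ g (by continuity) (C ^ 2 * SchwartzMap.seminorm ℝ 0 0 g) fun x => ?_
  rw [_root_.abs_mul, _root_.abs_pow]
  have h1 : |φ x| ^ 2 ≤ C ^ 2 := by
    have := hC x; nlinarith [_root_.abs_nonneg (φ x)]
  have h2 : |g x| ≤ SchwartzMap.seminorm ℝ 0 0 g := by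
    simpa using g.norm_le_seminorm ℝ x
  have := _root_.abs_nonneg (g x)
  nlinarith [_root_.abs_nonneg (φ x), sq_nonneg C]

set_option maxHeartbeats 1000000 in
/-- Weighted interpolation inequality
`‖w ∂ₓ³v‖₂² ≤ c (‖w² ∂ₓ²v‖₂ ‖∂ₓ⁴v‖₂ + ‖∂ₓ²v‖₂²)`. -/
theorem weighted_interpolation_third_derivative :
    ∃ c : ℝ, 0 < c ∧
      ∀ (v : SchwartzMap ℝ ℝ) (w : ℝ → ℝ),
        ContDiff ℝ (⊤ : ℕ∞) w → (∀ x, 0 ≤ w x) → (∃ B : ℝ, ∀ x, w x ≤ B) →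
        (∀ x, |deriv w x| ≤ 1) →
          eLpNorm (fun x : ℝ => w x * iteratedDeriv 3 (⇑v) x) 2 volume ^ 2
            ≤ ENNReal.ofReal c *
                (eLpNorm (fun x : ℝ => (w x) ^ 2 * iteratedDeriv 2 (⇑v) x) 2 volume
                    * eLpNorm (iteratedDeriv 4 ⇑v) 2 volume
                  + eLpNorm (iteratedDeriv 2 ⇑v) 2 volume ^ 2) := by
  refine ⟨4, by norm_num, ?_⟩
  rintro v w hw hw0 ⟨B, hB⟩ hw'
  have hD : ∀ f : SchwartzMap ℝ ℝ, ⇑(SchwartzMap.derivCLM ℝ ℝ f) = deriv ⇑f := fun f =>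
    funext fun x => SchwartzMap.derivCLM_apply ℝ f x
  set g2 : SchwartzMap ℝ ℝ := SchwartzMap.derivCLM ℝ ℝ (SchwartzMap.derivCLM ℝ ℝ v) with hg2def
  set g3 : SchwartzMap ℝ ℝ := SchwartzMap.derivCLM ℝ ℝ g2 with hg3def
  set g4 : SchwartzMap ℝ ℝ := SchwartzMap.derivCLM ℝ ℝ g3 with hg4def
  have h2 : iteratedDeriv 2 ⇑v = ⇑g2 := by
    rw [show (2:ℕ) = 1 + 1 from rfl, iteratedDeriv_succ, iteratedDeriv_one]
    simp only [hg2def, hD]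
  have h3 : iteratedDeriv 3 ⇑v = ⇑g3 := by
    rw [show (3:ℕ) = 2 + 1 from rfl, iteratedDeriv_succ, h2]
    simp only [hg3def, hD]
  have h4 : iteratedDeriv 4 ⇑v = ⇑g4 := by
    rw [show (4:ℕ) = 3 + 1 from rfl, iteratedDeriv_succ, h3]
    simp only [hg4def, hD]
  rw [h2, h3, h4]
  -- basic facts about w and the Schwartz functions
  have hwc : Continuous w := hw.continuous
  have hw'c : Continuous (deriv w) := hw.continuous_deriv (by simp)
  have hB0 : 0 ≤ B := le_trans (hw0 0) (hB 0)
  have habsw : ∀ x, |w x| ≤ B := fun x => _root_.abs_le.2 ⟨by linarith [hw0 x], hB x⟩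
  set C2 : ℝ := SchwartzMap.seminorm ℝ 0 0 g2 with hC2def
  set C3 : ℝ := SchwartzMap.seminorm ℝ 0 0 g3 with hC3def
  set C4 : ℝ := SchwartzMap.seminorm ℝ 0 0 g4 with hC4def
  have hC2 : ∀ x, |g2 x| ≤ C2 := fun x => by simpa using g2.norm_le_seminorm ℝ x
  have hC3 : ∀ x, |g3 x| ≤ C3 := fun x => by simpa using g3.norm_le_seminorm ℝ x
  have hC4 : ∀ x, |g4 x| ≤ C4 := fun x => by simpa using g4.norm_le_seminorm ℝ x
  have hC3n : 0 ≤ C3 := le_trans (_root_.abs_nonneg _) (hC3 0)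
  have hC4n : 0 ≤ C4 := le_trans (_root_.abs_nonneg _) (hC4 0)
  -- derivatives
  have hwd : ∀ x, HasDerivAt w (deriv w x) x := fun x =>
    ((hw.differentiable (by simp)) x).hasDerivAt
  have hgd : ∀ (f : SchwartzMap ℝ ℝ) (x : ℝ),
      HasDerivAt ⇑f (SchwartzMap.derivCLM ℝ ℝ f x) x := fun f x => by
    rw [show SchwartzMap.derivCLM ℝ ℝ f x = deriv f x from congrFun (hD f) x]
    exact f.differentiableAt.hasDerivAt
  have hFd : ∀ x, HasDerivAt (fun y => w y ^ 2 * g3 y * g2 y)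
      ((2 * w x * deriv w x * g3 x * g2 x) + (w x ^ 2 * g4 x) * g2 x
        + (w x * g3 x) ^ 2) x := by
    intro x
    have h1 : HasDerivAt (fun y => w y ^ 2) (2 * w x * deriv w x) x := by
      have h := (hwd x).fun_pow 2
      refine h.congr_deriv ?_
      norm_num
    have hg3x : HasDerivAt ⇑g3 (g4 x) x := hgd g3 x
    have hg2x : HasDerivAt ⇑g2 (g3 x) x := hgd g2 x
    have h3' := (h1.fun_mul hg3x).fun_mul hg2x
    refine h3'.congr_deriv ?_
    ring
  -- integrability
  have hi1 : Integrable (fun x => 2 * w x * deriv w x * g3 x * g2 x) volume := by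
    have : (fun x => 2 * w x * deriv w x * g3 x * g2 x)
        = fun x => (2 * w x * deriv w x * g3 x) * g2 x := by funext x; ring
    rw [this]
    refine aux_integrable _ g2 (((continuous_const.mul hwc).mul hw'c).mul g3.continuous) (2 * B * C3) fun x => ?_
    simp only [_root_.abs_mul, _root_.abs_two]
    calc 2 * |w x| * |deriv w x| * |g3 x| ≤ 2 * B * 1 * C3 := by
          gcongr <;> [exact habsw x; exact hw' x; exact hC3 x]
      _ = 2 * B * C3 := by ring
  have hi2 : Integrable (fun x => (w x ^ 2 * g4 x) * g2 x) volume := by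
    refine aux_integrable _ g2 ((hwc.pow 2).mul g4.continuous) (B ^ 2 * C4) fun x => ?_
    simp only [_root_.abs_mul, _root_.abs_pow]
    gcongr <;> [exact habsw x; exact hC4 x]
  have hi3 : Integrable (fun x => (w x * g3 x) ^ 2) volume := by
    have : (fun x => (w x * g3 x) ^ 2) = fun x => (w x ^ 2 * g3 x) * g3 x := by
      funext x; ring
    rw [this]
    refine aux_integrable _ g3 ((hwc.pow 2).mul g3.continuous) (B ^ 2 * C3) fun x => ?_
    simp only [_root_.abs_mul, _root_.abs_pow]
    gcongr <;> [exact habsw x; exact hC3 x]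
  have hiF : Integrable (fun x => w x ^ 2 * g3 x * g2 x) volume := by
    refine aux_integrable _ g2 ((hwc.pow 2).mul g3.continuous) (B ^ 2 * C3) fun x => ?_
    simp only [_root_.abs_mul, _root_.abs_pow]
    gcongr <;> [exact habsw x; exact hC3 x]
  -- L² membership
  have hm1 : MemLp (fun x => w x * g3 x) 2 volume := aux_memL2 w g3 hwc B habsw
  have hm2 : MemLp (fun x => w x ^ 2 * g2 x) 2 volume := by
    refine aux_memL2 _ g2 (hwc.pow 2) (B ^ 2) fun x => ?_
    rw [_root_.abs_pow]
    gcongr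
    exact habsw x
  have hm4 : MemLp (⇑g4) 2 volume := by
    have := aux_memL2 (fun _ => 1) g4 continuous_const 1 (fun x => by norm_num)
    simpa using this
  have hmg2 : MemLp (⇑g2) 2 volume := by
    have := aux_memL2 (fun _ => 1) g2 continuous_const 1 (fun x => by norm_num)
    simpa using this
  -- the integral identity from integration by parts
  have hzero : (∫ x, ((2 * w x * deriv w x * g3 x * g2 x) + (w x ^ 2 * g4 x) * g2 x
      + (w x * g3 x) ^ 2)) = 0 :=
    integral_eq_zero_of_hasDerivAt_of_integrable hFd ((hi1.add hi2).add hi3) hiF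
  have hS : Integrable (fun x => (2 * w x * deriv w x * g3 x * g2 x)
      + (w x ^ 2 * g4 x) * g2 x) volume := hi1.add hi2
  rw [integral_add hS hi3, integral_add hi1 hi2] at hzero
  set IA := ∫ x, (w x * g3 x) ^ 2 with hIAdef
  set IN := ∫ x, (g2 x) ^ 2 with hINdef
  set IM := ∫ x, (w x ^ 2 * g2 x) ^ 2 with hIMdef
  set IK := ∫ x, (g4 x) ^ 2 with hIKdef
  have hIA0 : 0 ≤ IA := integral_nonneg fun x => sq_nonneg _
  have hIN0 : 0 ≤ IN := integral_nonneg fun x => sq_nonneg _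
  have hIM0 : 0 ≤ IM := integral_nonneg fun x => sq_nonneg _
  have hIK0 : 0 ≤ IK := integral_nonneg fun x => sq_nonneg _
  -- bound on the first integral
  have hb1 : |∫ x, 2 * w x * deriv w x * g3 x * g2 x| ≤ IA / 2 + 2 * IN := by
    have hint : Integrable (fun x => (w x * g3 x) ^ 2 / 2 + 2 * (g2 x) ^ 2) volume :=
      (hi3.div_const 2).add ((hmg2.integrable_sq).const_mul 2)
    calc |∫ x, 2 * w x * deriv w x * g3 x * g2 x|
        ≤ ∫ x, |2 * w x * deriv w x * g3 x * g2 x| := by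
          have h := norm_integral_le_integral_norm (μ := volume)
            (fun x => 2 * w x * deriv w x * g3 x * g2 x)
          simp only [Real.norm_eq_abs] at h
          exact h
      _ ≤ ∫ x, ((w x * g3 x) ^ 2 / 2 + 2 * (g2 x) ^ 2) := by
          refine integral_mono hi1.abs hint fun x => ?_
          have ha := _root_.abs_nonneg (w x * g3 x)
          have hb := _root_.abs_nonneg (g2 x)
          have hd := hw' x
          have hdn := _root_.abs_nonneg (deriv w x)
          have e1 : |2 * w x * deriv w x * g3 x * g2 x|
              = |w x * g3 x| * |g2 x| * (2 * |deriv w x|) := by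
            simp only [_root_.abs_mul, _root_.abs_two]; ring
          have e2 : (w x * g3 x) ^ 2 = |w x * g3 x| ^ 2 := (_root_.sq_abs _).symm
          have e3 : (g2 x) ^ 2 = |g2 x| ^ 2 := (_root_.sq_abs _).symm
          rw [e1, e2, e3]
          nlinarith [sq_nonneg (|w x * g3 x| - 2 * |g2 x|), mul_nonneg ha hb]
      _ = IA / 2 + 2 * IN := by
          have hA : Integrable (fun x => (w x * g3 x) ^ 2 / 2) volume := hi3.div_const 2
          have hBq : Integrable (fun x => 2 * (g2 x) ^ 2) volume :=
            (hmg2.integrable_sq).const_mul 2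
          rw [integral_add hA hBq,
            integral_div, integral_const_mul, hIAdef, hINdef]
  -- Cauchy-Schwarz for the second integral
  have hb2 : |∫ x, (w x ^ 2 * g4 x) * g2 x| ≤ IM ^ ((2:ℝ)⁻¹) * IK ^ ((2:ℝ)⁻¹) := by
    have hpq : Real.HolderConjugate 2 2 := Real.HolderConjugate.two_two
    have habs2 : MemLp (fun x => |w x ^ 2 * g2 x|) (ENNReal.ofReal 2) volume := by
      rw [show ENNReal.ofReal (2:ℝ) = 2 by norm_num]
      have h := hm2.norm
      simp only [Real.norm_eq_abs] at h
      exact h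
    have habs4 : MemLp (fun x => |g4 x|) (ENNReal.ofReal 2) volume := by
      rw [show ENNReal.ofReal (2:ℝ) = 2 by norm_num]
      have h := hm4.norm
      simp only [Real.norm_eq_abs] at h
      exact h
    have hH := integral_mul_le_Lp_mul_Lq_of_nonneg hpq
      (Filter.Eventually.of_forall fun x => _root_.abs_nonneg (w x ^ 2 * g2 x))
      (Filter.Eventually.of_forall fun x => _root_.abs_nonneg (g4 x)) habs2 habs4
    have hrw : ∀ y : ℝ, |y| ^ (2:ℝ) = y ^ 2 := fun y => by
      rw [show (2:ℝ) = ((2:ℕ):ℝ) by norm_num, Real.rpow_natCast, _root_.sq_abs]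
    simp only [hrw, one_div] at hH
    calc |∫ x, (w x ^ 2 * g4 x) * g2 x|
        ≤ ∫ x, |(w x ^ 2 * g4 x) * g2 x| := by
          have h := norm_integral_le_integral_norm (μ := volume)
            (fun x => (w x ^ 2 * g4 x) * g2 x)
          simp only [Real.norm_eq_abs] at h
          exact h
      _ = ∫ x, |w x ^ 2 * g2 x| * |g4 x| := by
          refine integral_congr_ae (Filter.Eventually.of_forall fun x => ?_)
          simp only [_root_.abs_mul]; ring
      _ ≤ IM ^ ((2:ℝ)⁻¹) * IK ^ ((2:ℝ)⁻¹) := hH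
  -- the key real inequality
  have hmk : 0 ≤ IM ^ ((2:ℝ)⁻¹) * IK ^ ((2:ℝ)⁻¹) :=
    mul_nonneg (Real.rpow_nonneg hIM0 _) (Real.rpow_nonneg hIK0 _)
  have key : IA ≤ 4 * (IM ^ ((2:ℝ)⁻¹) * IK ^ ((2:ℝ)⁻¹) + IN) := by
    have h2 := _root_.neg_abs_le (∫ x, 2 * w x * deriv w x * g3 x * g2 x)
    have h3 := _root_.neg_abs_le (∫ x, (w x ^ 2 * g4 x) * g2 x)
    linarith [hb1, hb2]
  -- convert eLpNorms to integrals
  have conv : ∀ (f : ℝ → ℝ), MemLp f 2 volume →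
      eLpNorm f 2 volume = ENNReal.ofReal ((∫ x, (f x) ^ 2) ^ ((2:ℝ)⁻¹)) := by
    intro f hf
    rw [hf.eLpNorm_eq_integral_rpow_norm (by norm_num) (by norm_num)]
    have hi : (∫ x, ‖f x‖ ^ ((2:ℝ≥0∞).toReal)) = ∫ x, (f x) ^ 2 := by
      refine integral_congr_ae (Filter.Eventually.of_forall fun x => ?_)
      simp only [ENNReal.toReal_ofNat, Real.norm_eq_abs]
      rw [show (2:ℝ) = ((2:ℕ):ℝ) by norm_num, Real.rpow_natCast, _root_.sq_abs]
    rw [hi, ENNReal.toReal_ofNat]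
  rw [conv _ hm1, conv _ hm2, conv _ hm4, conv _ hmg2]
  simp only [← hIAdef, ← hINdef, ← hIMdef, ← hIKdef]
  have coll : ∀ r : ℝ, 0 ≤ r → (ENNReal.ofReal (r ^ ((2:ℝ)⁻¹))) ^ 2 = ENNReal.ofReal r := by
    intro r hr
    rw [← ENNReal.ofReal_pow (Real.rpow_nonneg hr _)]
    congr 1
    rw [← Real.rpow_natCast (r ^ ((2:ℝ)⁻¹)) 2, ← Real.rpow_mul hr]
    norm_num
  rw [coll IA hIA0, coll IN hIN0,
    ← ENNReal.ofReal_mul (Real.rpow_nonneg hIM0 _),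
    ← ENNReal.ofReal_add hmk hIN0,
    ← ENNReal.ofReal_mul (by norm_num : (0:ℝ) ≤ 4)]
  exact ENNReal.ofReal_le_ofReal key
end

section
/- There is a universal constant c > 0 with the following property: for every Schwartz function v on ℝ and every smooth, bounded, nonnegative function w on ℝ with ‖w'‖_{L^∞} ≤ 1, one has ‖w² ∂ₓ²v‖_{L²}² ≤ c ( ‖w³ ∂ₓv‖_{L²} ‖w ∂ₓ³v‖_{L²} + ‖w ∂ₓv‖_{L²}² ). -/
open MeasureTheory Real Complex Filter
open scoped FourierTransform ENNReal

section Aux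

open MeasureTheory Real Filter

lemma bdd_mul_schwartz_integrable {g : ℝ → ℝ} (hg : Continuous g) {C : ℝ}
    (hb : ∀ x, |g x| ≤ C) (s : SchwartzMap ℝ ℝ) :
    Integrable (fun x => g x * s x) volume :=
  s.integrable.bdd_mul hg.aestronglyMeasurable (Eventually.of_forall fun x => by simpa using hb x)

lemma bdd_mul_schwartz_memℒp {g : ℝ → ℝ} (hg : Continuous g) {C : ℝ}
    (hb : ∀ x, |g x| ≤ C) (s : SchwartzMap ℝ ℝ) :
    MemLp (fun x => g x * s x) 2 volume := by
  rw [memLp_two_iff_integrable_sq (f := fun x => g x * s x) ((hg.mul s.continuous).aestronglyMeasurable)]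
  have h := bdd_mul_schwartz_integrable (g := fun x => g x ^ 2 * s x)
    ((hg.pow 2).mul s.continuous) (C := C ^ 2 * SchwartzMap.seminorm ℝ 0 0 s)
    (fun x => by
      have h1 := hb x
      have h2 : ‖s x‖ ≤ SchwartzMap.seminorm ℝ 0 0 s := SchwartzMap.norm_le_seminorm ℝ s x
      have h0 : (0:ℝ) ≤ |g x| := abs_nonneg _
      rw [abs_mul, _root_.abs_pow]
      calc |g x| ^ 2 * |s x| ≤ C ^ 2 * ‖s x‖ := by
            apply mul_le_mul (pow_le_pow_left₀ h0 h1 2) le_rfl (abs_nonneg _)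
            positivity
        _ ≤ C ^ 2 * SchwartzMap.seminorm ℝ 0 0 s := by
            apply mul_le_mul_of_nonneg_left h2; positivity) s
  convert h using 2 with x
  · rfl
  ring

lemma my_eLpNorm_two_eq {a : ℝ → ℝ} (ha : MemLp a 2 volume) :
    eLpNorm a 2 volume = ENNReal.ofReal (Real.sqrt (∫ x, a x ^ 2)) := by
  rw [ha.eLpNorm_eq_integral_rpow_norm two_ne_zero ENNReal.ofNat_ne_top]
  congr 1
  rw [Real.sqrt_eq_rpow]
  have h2 : (2 : ℝ≥0∞).toReal = (2 : ℝ) := by simp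
  rw [h2]
  norm_num

lemma my_holder_two {a b : ℝ → ℝ} (ha : MemLp a 2 volume) (hb : MemLp b 2 volume) :
    ∫ x, |a x| * |b x| ≤ Real.sqrt (∫ x, a x ^ 2) * Real.sqrt (∫ x, b x ^ 2) := by
  have conj : Real.HolderConjugate 2 2 := ⟨by norm_num, by norm_num, by norm_num⟩
  have h2 : ENNReal.ofReal (2:ℝ) = 2 := by norm_num
  have h := integral_mul_norm_le_Lp_mul_Lq (μ := volume) conj (h2 ▸ ha) (h2 ▸ hb)
  have ea : ∫ x, ‖a x‖ ^ (2:ℝ) = ∫ x, a x ^ 2 := by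
    apply integral_congr_ae; filter_upwards with x
    rw [show ((2:ℝ)) = ((2:ℕ):ℝ) by norm_num, Real.rpow_natCast]; simp [sq_abs]
  have eb : ∫ x, ‖b x‖ ^ (2:ℝ) = ∫ x, b x ^ 2 := by
    apply integral_congr_ae; filter_upwards with x
    rw [show ((2:ℝ)) = ((2:ℕ):ℝ) by norm_num, Real.rpow_natCast]; simp [sq_abs]
  rw [ea, eb] at h
  simp only [Real.norm_eq_abs] at h
  calc ∫ x, |a x| * |b x| ≤ (∫ x, a x ^ 2) ^ (1/2:ℝ) * (∫ x, b x ^ 2) ^ (1/2:ℝ) := h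
    _ = _ := by rw [Real.sqrt_eq_rpow, Real.sqrt_eq_rpow]

end Aux

set_option maxHeartbeats 1000000 in
/-- Weighted interpolation inequality
`‖w² ∂ₓ²v‖₂² ≤ c (‖w³ ∂ₓv‖₂ ‖w ∂ₓ³v‖₂ + ‖w ∂ₓv‖₂²)`. -/
theorem weighted_interpolation_second_derivative :
    ∃ c : ℝ, 0 < c ∧
      ∀ (v : SchwartzMap ℝ ℝ) (w : ℝ → ℝ),
        ContDiff ℝ (⊤ : ℕ∞) w → (∀ x, 0 ≤ w x) → (∃ B : ℝ, ∀ x, w x ≤ B) →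
        (∀ x, |deriv w x| ≤ 1) →
          eLpNorm (fun x : ℝ => (w x) ^ 2 * iteratedDeriv 2 (⇑v) x) 2 volume ^ 2
            ≤ ENNReal.ofReal c *
                (eLpNorm (fun x : ℝ => (w x) ^ 3 * deriv (⇑v) x) 2 volume
                    * eLpNorm (fun x : ℝ => w x * iteratedDeriv 3 (⇑v) x) 2 volume
                  + eLpNorm (fun x : ℝ => w x * deriv (⇑v) x) 2 volume ^ 2) := by
  refine ⟨16, by norm_num, ?_⟩
  rintro v w hw hw0 ⟨B, hwB⟩ hw1
  set v1 := SchwartzMap.derivCLM ℝ ℝ v with hv1def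
  set v2 := SchwartzMap.derivCLM ℝ ℝ v1 with hv2def
  set v3 := SchwartzMap.derivCLM ℝ ℝ v2 with hv3def
  have e1 : deriv (⇑v) = ⇑v1 := by funext x; simp [hv1def, SchwartzMap.derivCLM_apply]
  have e2 : iteratedDeriv 2 (⇑v) = ⇑v2 := by
    rw [iteratedDeriv_succ, iteratedDeriv_one, e1]
    funext x; simp [hv2def, SchwartzMap.derivCLM_apply]
  have e3 : iteratedDeriv 3 (⇑v) = ⇑v3 := by
    rw [iteratedDeriv_succ, e2]
    funext x; simp [hv3def, SchwartzMap.derivCLM_apply]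
  have hwd : ∀ x, HasDerivAt w (deriv w x) x :=
    fun x => ((hw.differentiable (by simp)) x).hasDerivAt
  have hv1d : ∀ x, HasDerivAt (⇑v1) (v2 x) x := by
    intro x
    have := (v1.differentiableAt (x := x)).hasDerivAt
    simpa [hv2def, SchwartzMap.derivCLM_apply] using this
  have hv2d : ∀ x, HasDerivAt (⇑v2) (v3 x) x := by
    intro x
    have := (v2.differentiableAt (x := x)).hasDerivAt
    simpa [hv3def, SchwartzMap.derivCLM_apply] using this
  have hB0 : 0 ≤ B := le_trans (hw0 0) (hwB 0)
  have hwc : Continuous w := hw.continuous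
  have hwc' : Continuous (deriv w) := hw.continuous_deriv (by simp)
  have hwabs : ∀ x, |w x| ≤ B := fun x => by
    rw [_root_.abs_of_nonneg (hw0 x)]; exact hwB x
  set G : ℝ → ℝ := fun x => 4 * w x ^ 3 * deriv w x * (v2 x * v1 x)
      + w x ^ 4 * (v3 x * v1 x) + w x ^ 4 * (v2 x * v2 x) with hGdef
  set F : ℝ → ℝ := fun x => w x ^ 4 * (v2 x * v1 x) with hFdef
  have hFd : ∀ x, HasDerivAt F (G x) x := by
    intro x
    have h := ((hwd x).pow 4).mul ((hv2d x).mul (hv1d x))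
    refine h.congr_deriv ?_
    simp [hGdef]; ring
  have sb : ∀ s : SchwartzMap ℝ ℝ, ∀ x, |s x| ≤ SchwartzMap.seminorm ℝ 0 0 s :=
    fun s x => SchwartzMap.norm_le_seminorm ℝ s x
  have hint : ∀ (g : ℝ → ℝ), Continuous g → (∃ C, ∀ x, |g x| ≤ C) →
      ∀ s : SchwartzMap ℝ ℝ, Integrable (fun x => g x * s x) volume := by
    intro g hg ⟨C, hC⟩ s
    exact s.integrable.bdd_mul hg.aestronglyMeasurable (Eventually.of_forall fun x => by simpa using hC x)
  have hT1 : Integrable (fun x => 4 * w x ^ 3 * deriv w x * (v2 x * v1 x)) volume := by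
    have := hint (fun x => 4 * w x ^ 3 * deriv w x * v2 x)
      (((continuous_const.mul (hwc.pow 3)).mul hwc').mul v2.continuous)
      ⟨4 * B ^ 3 * 1 * SchwartzMap.seminorm ℝ 0 0 v2, fun x => by
        have h1 := hwabs x; have h2 := hw1 x; have h3 := sb v2 x
        have h4 : |w x ^ 3| ≤ B ^ 3 := by
          rw [_root_.abs_pow]; exact pow_le_pow_left₀ (abs_nonneg _) h1 3
        calc |4 * w x ^ 3 * deriv w x * v2 x|
            = 4 * |w x ^ 3| * |deriv w x| * |v2 x| := by
              rw [abs_mul, abs_mul, abs_mul]; norm_num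
          _ ≤ 4 * B ^ 3 * 1 * SchwartzMap.seminorm ℝ 0 0 v2 := by
              gcongr <;> positivity⟩ v1
    convert this using 2 with x
    ring
  have hT2 : Integrable (fun x => w x ^ 4 * (v3 x * v1 x)) volume := by
    have := hint (fun x => w x ^ 4 * v3 x)
      ((hwc.pow 4).mul v3.continuous)
      ⟨B ^ 4 * SchwartzMap.seminorm ℝ 0 0 v3, fun x => by
        have h1 := hwabs x; have h3 := sb v3 x
        rw [abs_mul, _root_.abs_pow]
        exact mul_le_mul (pow_le_pow_left₀ (abs_nonneg _) h1 4) h3 (abs_nonneg _)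
          (by positivity)⟩ v1
    convert this using 2 with x
    ring
  have hT3 : Integrable (fun x => w x ^ 4 * (v2 x * v2 x)) volume := by
    have := hint (fun x => w x ^ 4 * v2 x)
      ((hwc.pow 4).mul v2.continuous)
      ⟨B ^ 4 * SchwartzMap.seminorm ℝ 0 0 v2, fun x => by
        have h1 := hwabs x; have h3 := sb v2 x
        rw [abs_mul, _root_.abs_pow]
        exact mul_le_mul (pow_le_pow_left₀ (abs_nonneg _) h1 4) h3 (abs_nonneg _)
          (by positivity)⟩ v2
    convert this using 2 with x
    ring
  have hG : Integrable G volume := (hT1.add hT2).add hT3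
  have hFlim : Tendsto F (cocompact ℝ) (nhds 0) := by
    have h2 : Tendsto (⇑v2) (cocompact ℝ) (nhds 0) := zero_at_infty v2
    have hb : ∀ x, ‖F x‖ ≤ (B ^ 4 * SchwartzMap.seminorm ℝ 0 0 v1) * ‖v2 x‖ := by
      intro x
      have h1 := hwabs x; have h3 := sb v1 x
      simp only [hFdef, Real.norm_eq_abs]
      rw [abs_mul, abs_mul, _root_.abs_pow]
      calc |w x| ^ 4 * (|v2 x| * |v1 x|)
          ≤ B ^ 4 * (|v2 x| * SchwartzMap.seminorm ℝ 0 0 v1) := by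
            exact mul_le_mul (pow_le_pow_left₀ (abs_nonneg _) h1 4)
              (mul_le_mul_of_nonneg_left h3 (abs_nonneg _)) (by positivity) (by positivity)
        _ = B ^ 4 * SchwartzMap.seminorm ℝ 0 0 v1 * |v2 x| := by ring
    apply squeeze_zero_norm hb
    have := (h2.norm).const_mul (B ^ 4 * SchwartzMap.seminorm ℝ 0 0 v1)
    simpa using this
  have hFtop : Tendsto F atTop (nhds 0) := by
    refine hFlim.mono_left ?_
    rw [cocompact_eq_atBot_atTop]
    exact le_sup_right
  have hFbot : Tendsto F atBot (nhds 0) := by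
    refine hFlim.mono_left ?_
    rw [cocompact_eq_atBot_atTop]
    exact le_sup_left
  have hIoi : ∫ x in Set.Ioi (0:ℝ), G x = 0 - F 0 :=
    integral_Ioi_of_hasDerivAt_of_tendsto' (fun x _ => hFd x) hG.integrableOn hFtop
  have hIic : ∫ x in Set.Iic (0:ℝ), G x = F 0 - 0 :=
    integral_Iic_of_hasDerivAt_of_tendsto' (fun x _ => hFd x) hG.integrableOn hFbot
  have hG0 : (∫ x, G x) = 0 := by
    rw [← intervalIntegral.integral_Iic_add_Ioi hG.integrableOn hG.integrableOn, hIoi, hIic]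
    ring
  -- the four weighted functions
  set a : ℝ → ℝ := fun x => w x ^ 2 * v2 x with hadef
  set b : ℝ → ℝ := fun x => w x * v1 x with hbdef
  set p : ℝ → ℝ := fun x => w x ^ 3 * v1 x with hpdef
  set q : ℝ → ℝ := fun x => w x * v3 x with hqdef
  have hpow : ∀ (k : ℕ) (x : ℝ), |w x ^ k| ≤ B ^ k := fun k x => by
    rw [_root_.abs_pow]; exact pow_le_pow_left₀ (abs_nonneg _) (hwabs x) k
  have hma : MemLp a 2 volume :=
    bdd_mul_schwartz_memℒp (hwc.pow 2) (hpow 2) v2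
  have hmb : MemLp b 2 volume := by
    have := bdd_mul_schwartz_memℒp (g := fun x => w x ^ 1) (hwc.pow 1) (hpow 1) v1
    simpa [pow_one] using this
  have hmp : MemLp p 2 volume :=
    bdd_mul_schwartz_memℒp (hwc.pow 3) (hpow 3) v1
  have hmq : MemLp q 2 volume := by
    have := bdd_mul_schwartz_memℒp (g := fun x => w x ^ 1) (hwc.pow 1) (hpow 1) v3
    simpa [pow_one] using this
  set A := ∫ x, a x ^ 2 with hAdef
  set B2 := ∫ x, b x ^ 2 with hB2def
  set P := ∫ x, p x ^ 2 with hPdef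
  set Q := ∫ x, q x ^ 2 with hQdef
  have hA0 : 0 ≤ A := integral_nonneg fun x => sq_nonneg _
  have hB20 : 0 ≤ B2 := integral_nonneg fun x => sq_nonneg _
  have hP0 : 0 ≤ P := integral_nonneg fun x => sq_nonneg _
  have hQ0 : 0 ≤ Q := integral_nonneg fun x => sq_nonneg _
  -- integration by parts identity
  have hT12 : Integrable (fun x => 4 * w x ^ 3 * deriv w x * (v2 x * v1 x)
      + w x ^ 4 * (v3 x * v1 x)) volume := hT1.add hT2
  have hs1 : (∫ x, (4 * w x ^ 3 * deriv w x * (v2 x * v1 x) + w x ^ 4 * (v3 x * v1 x))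
        + w x ^ 4 * (v2 x * v2 x))
      = (∫ x, 4 * w x ^ 3 * deriv w x * (v2 x * v1 x) + w x ^ 4 * (v3 x * v1 x))
        + ∫ x, w x ^ 4 * (v2 x * v2 x) := integral_add hT12 hT3
  have hs2 : (∫ x, (4 * w x ^ 3 * deriv w x * (v2 x * v1 x)) + w x ^ 4 * (v3 x * v1 x))
      = (∫ x, 4 * w x ^ 3 * deriv w x * (v2 x * v1 x))
        + ∫ x, w x ^ 4 * (v3 x * v1 x) := integral_add hT1 hT2
  have hsplit : (∫ x, G x)
      = (∫ x, 4 * w x ^ 3 * deriv w x * (v2 x * v1 x))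
        + (∫ x, w x ^ 4 * (v3 x * v1 x)) + ∫ x, w x ^ 4 * (v2 x * v2 x) := by
    simp only [hGdef]
    rw [hs1, hs2]
  have hAeq : A = ∫ x, w x ^ 4 * (v2 x * v2 x) := by
    rw [hAdef]
    apply integral_congr_ae
    filter_upwards with x
    simp only [hadef]; ring
  have hAle : A = -(∫ x, 4 * w x ^ 3 * deriv w x * (v2 x * v1 x))
      - ∫ x, w x ^ 4 * (v3 x * v1 x) := by
    rw [hAeq]; rw [hG0] at hsplit; linarith
  -- integrability of the products of absolute values
  have hab_int : Integrable (fun x => |a x| * |b x|) volume := by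
    have h := (hint (fun x => w x ^ 3 * v2 x)
      ((hwc.pow 3).mul v2.continuous)
      ⟨B ^ 3 * SchwartzMap.seminorm ℝ 0 0 v2, fun x => by
        rw [abs_mul]
        exact mul_le_mul (hpow 3 x) (sb v2 x) (abs_nonneg _) (by positivity)⟩ v1).abs
    apply h.congr
    filter_upwards with x
    simp only [hadef, hbdef, abs_mul, _root_.abs_pow, _root_.abs_of_nonneg (hw0 x)]
    ring
  have hpq_int : Integrable (fun x => |p x| * |q x|) volume := by
    have h := (hint (fun x => w x ^ 4 * v3 x)
      ((hwc.pow 4).mul v3.continuous)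
      ⟨B ^ 4 * SchwartzMap.seminorm ℝ 0 0 v3, fun x => by
        rw [abs_mul]
        exact mul_le_mul (hpow 4 x) (sb v3 x) (abs_nonneg _) (by positivity)⟩ v1).abs
    apply h.congr
    filter_upwards with x
    simp only [hpdef, hqdef, abs_mul, _root_.abs_pow, _root_.abs_of_nonneg (hw0 x)]
    ring
  -- bound the two integrals
  have hb1 : |∫ x, 4 * w x ^ 3 * deriv w x * (v2 x * v1 x)| ≤ 4 * ∫ x, |a x| * |b x| := by
    calc |∫ x, 4 * w x ^ 3 * deriv w x * (v2 x * v1 x)|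
        ≤ ∫ x, |4 * w x ^ 3 * deriv w x * (v2 x * v1 x)| := by
          exact
            norm_integral_le_integral_norm (fun x => 4 * w x ^ 3 * deriv w x * (v2 x * v1 x))
      _ ≤ ∫ x, 4 * (|a x| * |b x|) := by
          refine integral_mono hT1.abs (hab_int.const_mul 4) fun x => ?_
          show |4 * w x ^ 3 * deriv w x * (v2 x * v1 x)| ≤ 4 * (|a x| * |b x|)
          have h1 := hw0 x; have h2 := hw1 x
          have e : |4 * w x ^ 3 * deriv w x * (v2 x * v1 x)|
              = 4 * w x ^ 3 * |deriv w x| * (|v2 x| * |v1 x|) := by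
            rw [abs_mul, abs_mul, abs_mul, abs_mul, _root_.abs_pow, _root_.abs_of_nonneg h1]
            norm_num
          have e2 : |a x| * |b x| = w x ^ 3 * (|v2 x| * |v1 x|) := by
            simp only [hadef, hbdef, abs_mul, _root_.abs_pow, _root_.abs_of_nonneg h1]
            ring
          rw [e, e2]
          have h3 : (0:ℝ) ≤ |v2 x| * |v1 x| := by positivity
          calc 4 * w x ^ 3 * |deriv w x| * (|v2 x| * |v1 x|)
              ≤ 4 * w x ^ 3 * 1 * (|v2 x| * |v1 x|) := by
                refine mul_le_mul_of_nonneg_right ?_ h3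
                exact mul_le_mul_of_nonneg_left h2 (by positivity)
            _ = 4 * (w x ^ 3 * (|v2 x| * |v1 x|)) := by ring
      _ = 4 * ∫ x, |a x| * |b x| := by rw [integral_const_mul]
  have hb2 : |∫ x, w x ^ 4 * (v3 x * v1 x)| ≤ ∫ x, |p x| * |q x| := by
    calc |∫ x, w x ^ 4 * (v3 x * v1 x)|
        ≤ ∫ x, |w x ^ 4 * (v3 x * v1 x)| := by
          simpa only [Real.norm_eq_abs] using
            norm_integral_le_integral_norm (fun x => w x ^ 4 * (v3 x * v1 x))
      _ = ∫ x, |p x| * |q x| := by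
          apply integral_congr_ae
          filter_upwards with x
          simp only [hpdef, hqdef, abs_mul, _root_.abs_pow, _root_.abs_of_nonneg (hw0 x)]
          ring
  -- Cauchy-Schwarz
  have hcs1 : ∫ x, |a x| * |b x| ≤ Real.sqrt A * Real.sqrt B2 := my_holder_two hma hmb
  have hcs2 : ∫ x, |p x| * |q x| ≤ Real.sqrt P * Real.sqrt Q := my_holder_two hmp hmq
  have hmain : A ≤ 4 * (Real.sqrt A * Real.sqrt B2) + Real.sqrt P * Real.sqrt Q := by
    have h1 : A ≤ |∫ x, 4 * w x ^ 3 * deriv w x * (v2 x * v1 x)|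
        + |∫ x, w x ^ 4 * (v3 x * v1 x)| := by
      rw [hAle]
      have := abs_nonneg (∫ x, 4 * w x ^ 3 * deriv w x * (v2 x * v1 x))
      have := neg_abs_le (∫ x, 4 * w x ^ 3 * deriv w x * (v2 x * v1 x))
      have := neg_abs_le (∫ x, w x ^ 4 * (v3 x * v1 x))
      linarith
    have h2 : (∫ x, |a x| * |b x|) ≤ Real.sqrt A * Real.sqrt B2 := hcs1
    have habnn : 0 ≤ ∫ x, |a x| * |b x| :=
      integral_nonneg fun x => mul_nonneg (abs_nonneg _) (abs_nonneg _)
    nlinarith [hb1, hb2, hcs2]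
  -- final real inequality
  have hfinal : A ≤ 16 * (Real.sqrt P * Real.sqrt Q + B2) := by
    nlinarith [Real.sq_sqrt hA0, Real.sq_sqrt hB20, Real.sqrt_nonneg A, Real.sqrt_nonneg B2,
      Real.sqrt_nonneg P, Real.sqrt_nonneg Q,
      mul_nonneg (Real.sqrt_nonneg P) (Real.sqrt_nonneg Q),
      sq_nonneg (Real.sqrt A - 4 * Real.sqrt B2)]
  -- convert to eLpNorm
  simp only [e1, e2, e3]
  rw [show (fun x : ℝ => w x ^ 2 * v2 x) = a from rfl,
    show (fun x : ℝ => w x ^ 3 * v1 x) = p from rfl,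
    show (fun x : ℝ => w x * v3 x) = q from rfl,
    show (fun x : ℝ => w x * v1 x) = b from rfl,
    my_eLpNorm_two_eq hma, my_eLpNorm_two_eq hmb, my_eLpNorm_two_eq hmp, my_eLpNorm_two_eq hmq]
  rw [← ENNReal.ofReal_pow (Real.sqrt_nonneg _), ← ENNReal.ofReal_pow (Real.sqrt_nonneg _),
    Real.sq_sqrt hA0, Real.sq_sqrt hB20,
    ← ENNReal.ofReal_mul (Real.sqrt_nonneg _),
    ← ENNReal.ofReal_add (mul_nonneg (Real.sqrt_nonneg _) (Real.sqrt_nonneg _)) hB20,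
    ← ENNReal.ofReal_mul (by norm_num : (0:ℝ) ≤ 16)]
  exact ENNReal.ofReal_le_ofReal hfinal
end

section
/- There is a universal constant c > 0 with the following property: for every Schwartz function v on ℝ and every smooth, bounded, nonnegative function w on ℝ with ‖w'‖_{L^∞} ≤ 1, one has ‖w ∂ₓ²v‖_{L²}² ≤ c ( ‖w² ∂ₓv‖_{L²} ‖∂ₓ³v‖_{L²} + ‖∂ₓv‖_{L²}² ). -/
open MeasureTheory Real Complex Filter
open scoped FourierTransform ENNReal

section SIAux
open MeasureTheory Real Filter Topology

private lemma schwartz_bound (f : SchwartzMap ℝ ℝ) : ∃ C, ∀ x, |f x| ≤ C :=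
  ⟨‖f.toBoundedContinuousFunction‖, fun x => by
    simpa using f.toBoundedContinuousFunction.norm_coe_le_norm x⟩

private lemma bdd_mul_integrable {b g : ℝ → ℝ} (hb : Continuous b) {C : ℝ}
    (hC : ∀ x, |b x| ≤ C) (hg : Integrable g volume) :
    Integrable (fun x => b x * g x) volume :=
  hg.bdd_mul (c := C) hb.aestronglyMeasurable (ae_of_all _ fun x => by simpa using hC x)

private lemma schwartz_mul_integrable (f g : SchwartzMap ℝ ℝ) :
    Integrable (fun x => f x * g x) volume := by
  obtain ⟨C, hC⟩ := schwartz_bound f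
  exact bdd_mul_integrable f.continuous hC g.integrable

private lemma schwartz_sq_integrable (f : SchwartzMap ℝ ℝ) :
    Integrable (fun x => f x ^ 2) volume := by
  simpa [sq] using schwartz_mul_integrable f f

private lemma schwartz_memℒp2 (f : SchwartzMap ℝ ℝ) : MemLp (⇑f) 2 volume := by
  rw [memLp_two_iff_integrable_sq f.continuous.aestronglyMeasurable]
  exact schwartz_sq_integrable f

private lemma bdd_mul_schwartz_memℒp2 {b : ℝ → ℝ} (hb : Continuous b) {C : ℝ}
    (hC : ∀ x, |b x| ≤ C) (f : SchwartzMap ℝ ℝ) :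
    MemLp (fun x => b x * f x) 2 volume := by
  rw [memLp_two_iff_integrable_sq (f := fun x => b x * f x) ((hb.mul f.continuous).aestronglyMeasurable)]
  have h : (fun x => (b x * f x) ^ 2) = fun x => (b x) ^ 2 * (f x) ^ 2 := by
    ext x; ring
  rw [h]
  refine bdd_mul_integrable (hb.pow 2) (C := C ^ 2) (fun x => ?_)
    (schwartz_sq_integrable f)
  have h1 := hC x
  have h2 : (0:ℝ) ≤ |b x| := _root_.abs_nonneg _
  calc |b x ^ 2| = |b x| ^ 2 := by rw [_root_.abs_pow, _root_.sq_abs, ← _root_.sq_abs]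
  _ ≤ C ^ 2 := by nlinarith

private lemma rpow_two_abs (y : ℝ) : |y| ^ (2:ℝ) = y ^ 2 := by
  rw [show (2:ℝ) = ((2:ℕ):ℝ) by norm_num, Real.rpow_natCast, _root_.sq_abs]

private lemma cs_abs {f g : ℝ → ℝ} (hf : MemLp f 2 volume) (hg : MemLp g 2 volume) :
    ∫ x, |f x| * |g x| ≤ (∫ x, f x ^ 2) ^ (1/2:ℝ) * (∫ x, g x ^ 2) ^ (1/2:ℝ) := by
  have hpq : Real.HolderConjugate 2 2 := Real.holderConjugate_iff.mpr ⟨one_lt_two, by norm_num⟩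
  have h2 : ENNReal.ofReal (2:ℝ) = 2 := by
    norm_num
  have hf' : MemLp (fun x => |f x|) (ENNReal.ofReal 2) volume := by
    rw [h2]; simpa [Real.norm_eq_abs] using hf.norm
  have hg' : MemLp (fun x => |g x|) (ENNReal.ofReal 2) volume := by
    rw [h2]; simpa [Real.norm_eq_abs] using hg.norm
  have := integral_mul_le_Lp_mul_Lq_of_nonneg hpq
    (Eventually.of_forall fun x => _root_.abs_nonneg (f x))
    (Eventually.of_forall fun x => _root_.abs_nonneg (g x)) hf' hg'
  simpa [rpow_two_abs] using this

private lemma elpnorm_eq {f : ℝ → ℝ} (hf : MemLp f 2 volume) :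
    eLpNorm f 2 volume = ENNReal.ofReal ((∫ x, f x ^ 2) ^ (1/2:ℝ)) := by
  rw [hf.eLpNorm_eq_integral_rpow_norm two_ne_zero ENNReal.ofNat_ne_top]
  congr 1
  rw [ENNReal.toReal_ofNat]
  simp_rw [Real.norm_eq_abs, rpow_two_abs]
  norm_num

private lemma elpnorm_sq_eq {f : ℝ → ℝ} (hf : MemLp f 2 volume) :
    eLpNorm f 2 volume ^ 2 = ENNReal.ofReal (∫ x, f x ^ 2) := by
  have ht : 0 ≤ ∫ x, f x ^ 2 := integral_nonneg fun x => sq_nonneg _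
  rw [elpnorm_eq hf, ← ENNReal.ofReal_pow (Real.rpow_nonneg ht _)]
  congr 1
  rw [← Real.rpow_natCast ((∫ x, f x ^ 2) ^ (1/2:ℝ)) 2, ← Real.rpow_mul ht]
  norm_num

end SIAux

open Topology

set_option maxHeartbeats 1000000 in
/-- Weighted interpolation inequality
`‖w ∂ₓ²v‖₂² ≤ c (‖w² ∂ₓv‖₂ ‖∂ₓ³v‖₂ + ‖∂ₓv‖₂²)`. -/
theorem weighted_interpolation_second_derivative_single_weight :
    ∃ c : ℝ, 0 < c ∧
      ∀ (v : SchwartzMap ℝ ℝ) (w : ℝ → ℝ),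
        ContDiff ℝ (⊤ : ℕ∞) w → (∀ x, 0 ≤ w x) → (∃ B : ℝ, ∀ x, w x ≤ B) →
        (∀ x, |deriv w x| ≤ 1) →
          eLpNorm (fun x : ℝ => w x * iteratedDeriv 2 (⇑v) x) 2 volume ^ 2
            ≤ ENNReal.ofReal c *
                (eLpNorm (fun x : ℝ => (w x) ^ 2 * deriv (⇑v) x) 2 volume
                    * eLpNorm (iteratedDeriv 3 ⇑v) 2 volume
                  + eLpNorm (deriv ⇑v) 2 volume ^ 2) := by
  refine ⟨4, by norm_num, ?_⟩
  rintro v w hw hw0 ⟨B, hB⟩ hw'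
  -- derivatives as Schwartz maps
  set v1 : SchwartzMap ℝ ℝ := SchwartzMap.derivCLM ℝ ℝ v with hv1def
  set v2 : SchwartzMap ℝ ℝ := SchwartzMap.derivCLM ℝ ℝ v1 with hv2def
  set v3 : SchwartzMap ℝ ℝ := SchwartzMap.derivCLM ℝ ℝ v2 with hv3def
  have e1 : ⇑v1 = deriv ⇑v := funext fun x => SchwartzMap.derivCLM_apply ℝ v x
  have e2 : ⇑v2 = deriv ⇑v1 := funext fun x => SchwartzMap.derivCLM_apply ℝ v1 x
  have e3 : ⇑v3 = deriv ⇑v2 := funext fun x => SchwartzMap.derivCLM_apply ℝ v2 x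
  have h2 : iteratedDeriv 2 (⇑v) = ⇑v2 := by
    rw [show (2:ℕ) = 1 + 1 from rfl, iteratedDeriv_succ, iteratedDeriv_one, ← e1, ← e2]
  have h3 : iteratedDeriv 3 (⇑v) = ⇑v3 := by
    rw [show (3:ℕ) = 2 + 1 from rfl, iteratedDeriv_succ, h2, ← e3]
  -- basic facts about w
  have hB0 : 0 ≤ B := le_trans (hw0 0) (hB 0)
  have hwabs : ∀ x, |w x| ≤ B := fun x => by
    rw [_root_.abs_of_nonneg (hw0 x)]; exact hB x
  have hwd : Differentiable ℝ w := hw.differentiable (by simp)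
  have hwc : Continuous w := hw.continuous
  have hw'c : Continuous (deriv w) := (hw.continuous_deriv (by simp))
  -- the function F and its derivative G
  set F : ℝ → ℝ := fun x => w x ^ 2 * (v1 x * v2 x) with hFdef
  set G : ℝ → ℝ := fun x =>
    2 * w x * deriv w x * (v1 x * v2 x) + ((w x * v2 x) ^ 2 + w x ^ 2 * v1 x * v3 x)
    with hGdef
  have hF : ∀ x, HasDerivAt F (G x) x := by
    intro x
    have hwx : HasDerivAt w (deriv w x) x := (hwd x).hasDerivAt
    have hw2 : HasDerivAt (fun y => w y ^ 2) (2 * w x * deriv w x) x := by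
      have := hwx.fun_pow 2
      exact this.congr_deriv (by norm_num)
    have hv1x : HasDerivAt (⇑v1) (v2 x) x := by
      have := (v1.differentiable x).hasDerivAt
      rwa [show deriv (⇑v1) x = v2 x from (congrFun e2 x).symm] at this
    have hv2x : HasDerivAt (⇑v2) (v3 x) x := by
      have := (v2.differentiable x).hasDerivAt
      rwa [show deriv (⇑v2) x = v3 x from (congrFun e3 x).symm] at this
    have := hw2.fun_mul (hv1x.fun_mul hv2x)
    exact this.congr_deriv (by simp only [hGdef]; ring)
  -- integrability
  have hG1int : Integrable (fun x => 2 * w x * deriv w x * (v1 x * v2 x)) volume := by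
    refine bdd_mul_integrable (by continuity) (C := 2 * B) (fun x => ?_)
      (schwartz_mul_integrable v1 v2)
    have h1 := hwabs x
    have h2 := hw' x
    calc |2 * w x * deriv w x| = 2 * |w x| * |deriv w x| := by
          rw [_root_.abs_mul, _root_.abs_mul]; norm_num
    _ ≤ 2 * B * 1 := by
          apply mul_le_mul _ h2 (_root_.abs_nonneg _) (by positivity)
          exact mul_le_mul_of_nonneg_left h1 (by norm_num)
    _ = 2 * B := by ring
  have hIint : Integrable (fun x => (w x * v2 x) ^ 2) volume := by
    have h : (fun x => (w x * v2 x) ^ 2) = fun x => w x ^ 2 * (v2 x * v2 x) := by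
      ext x; ring
    rw [h]
    refine bdd_mul_integrable (hwc.pow 2) (C := B ^ 2) (fun x => ?_)
      (schwartz_mul_integrable v2 v2)
    rw [_root_.abs_pow]
    exact pow_le_pow_left₀ (_root_.abs_nonneg _) (hwabs x) 2
  have hJint : Integrable (fun x => w x ^ 2 * v1 x * v3 x) volume := by
    have h : (fun x => w x ^ 2 * v1 x * v3 x) = fun x => w x ^ 2 * (v1 x * v3 x) := by
      ext x; ring
    rw [h]
    refine bdd_mul_integrable (hwc.pow 2) (C := B ^ 2) (fun x => ?_)
      (schwartz_mul_integrable v1 v3)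
    rw [_root_.abs_pow]
    exact pow_le_pow_left₀ (_root_.abs_nonneg _) (hwabs x) 2
  have hGint : Integrable G volume := by
    exact hG1int.add (hIint.add hJint)
  -- limits of F at ±∞
  have hv1v2 : Tendsto (fun x => v1 x * v2 x) (cocompact ℝ) (𝓝 0) := by
    have t1 : Tendsto (⇑v1) (cocompact ℝ) (𝓝 0) := zero_at_infty v1
    have t2 : Tendsto (⇑v2) (cocompact ℝ) (𝓝 0) := zero_at_infty v2
    simpa using t1.mul t2
  have hFbound : ∀ x, ‖F x‖ ≤ B ^ 2 * |v1 x * v2 x| := by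
    intro x
    rw [Real.norm_eq_abs, hFdef]
    simp only
    rw [_root_.abs_mul]
    apply mul_le_mul_of_nonneg_right _ (_root_.abs_nonneg _)
    rw [_root_.abs_pow]
    exact pow_le_pow_left₀ (_root_.abs_nonneg _) (hwabs x) 2
  have hFcocompact : Tendsto F (cocompact ℝ) (𝓝 0) :=
    squeeze_zero_norm hFbound (by simpa using (hv1v2.abs.const_mul (B ^ 2)))
  have hFtop : Tendsto F atTop (𝓝 0) := hFcocompact.mono_left _root_.atTop_le_cocompact
  have hFbot : Tendsto F atBot (𝓝 0) := hFcocompact.mono_left _root_.atBot_le_cocompact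
  -- integration by parts: ∫ G = 0
  have hIoi : ∫ x in Set.Ioi (0:ℝ), G x = 0 - F 0 :=
    integral_Ioi_of_hasDerivAt_of_tendsto' (fun x _ => hF x) hGint.integrableOn hFtop
  have hIic : ∫ x in Set.Iic (0:ℝ), G x = F 0 - 0 :=
    integral_Iic_of_hasDerivAt_of_tendsto' (fun x _ => hF x) hGint.integrableOn hFbot
  have htotal : ∫ x, G x = 0 := by
    rw [← intervalIntegral.integral_Iic_add_Ioi hGint.integrableOn hGint.integrableOn, hIoi, hIic]
    ring
  -- split the integral
  set T1 : ℝ := ∫ x, 2 * w x * deriv w x * (v1 x * v2 x) with hT1def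
  set I : ℝ := ∫ x, (w x * v2 x) ^ 2 with hIdef
  set J : ℝ := ∫ x, w x ^ 2 * v1 x * v3 x with hJdef
  have hsplit : T1 + (I + J) = 0 := by
    have hIJ : Integrable (fun x => (w x * v2 x) ^ 2 + w x ^ 2 * v1 x * v3 x) volume :=
      hIint.add hJint
    have hadd : (∫ x, ((w x * v2 x) ^ 2 + w x ^ 2 * v1 x * v3 x)) = I + J :=
      integral_add hIint hJint
    have hadd2 : (∫ x, G x)
        = T1 + ∫ x, ((w x * v2 x) ^ 2 + w x ^ 2 * v1 x * v3 x) :=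
      integral_add hG1int hIJ
    rw [hadd] at hadd2
    rw [← hadd2]
    exact htotal
  -- MemLp facts
  have hm_wv2 : MemLp (fun x => w x * v2 x) 2 volume :=
    bdd_mul_schwartz_memℒp2 hwc hwabs v2
  have hw2abs : ∀ x, |w x ^ 2| ≤ B ^ 2 := fun x => by
    rw [_root_.abs_pow]; exact pow_le_pow_left₀ (_root_.abs_nonneg _) (hwabs x) 2
  have hm_w2v1 : MemLp (fun x => w x ^ 2 * v1 x) 2 volume :=
    bdd_mul_schwartz_memℒp2 (hwc.pow 2) hw2abs v1
  have hm_v1 : MemLp (⇑v1) 2 volume := schwartz_memℒp2 v1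
  have hm_v3 : MemLp (⇑v3) 2 volume := schwartz_memℒp2 v3
  -- the real quantities
  set a : ℝ := (∫ x, (w x ^ 2 * v1 x) ^ 2) ^ (1/2:ℝ) with hadef
  set b : ℝ := (∫ x, v3 x ^ 2) ^ (1/2:ℝ) with hbdef
  set l : ℝ := (∫ x, v1 x ^ 2) ^ (1/2:ℝ) with hldef
  set s : ℝ := I ^ (1/2:ℝ) with hsdef
  have hInn : 0 ≤ I := integral_nonneg fun x => sq_nonneg _
  have ha0 : 0 ≤ a := Real.rpow_nonneg (integral_nonneg fun x => sq_nonneg _) _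
  have hb0 : 0 ≤ b := Real.rpow_nonneg (integral_nonneg fun x => sq_nonneg _) _
  have hl0 : 0 ≤ l := Real.rpow_nonneg (integral_nonneg fun x => sq_nonneg _) _
  have hs0 : 0 ≤ s := Real.rpow_nonneg hInn _
  have hs2 : s ^ 2 = I := by
    rw [hsdef, ← Real.rpow_natCast (I ^ (1/2:ℝ)) 2, ← Real.rpow_mul hInn]
    norm_num
  -- bound on J
  have hJbound : |J| ≤ a * b := by
    have h1 : |J| ≤ ∫ x, |w x ^ 2 * v1 x| * |v3 x| := by
      have h0 := norm_integral_le_integral_norm (fun x => w x ^ 2 * v1 x * v3 x) (μ := volume)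
      simp only [Real.norm_eq_abs] at h0
      calc |J| ≤ ∫ x, |w x ^ 2 * v1 x * v3 x| := h0
      _ = ∫ x, |w x ^ 2 * v1 x| * |v3 x| := by simp_rw [_root_.abs_mul]
    exact h1.trans (cs_abs hm_w2v1 hm_v3)
  -- bound on T1
  have hT1bound : |T1| ≤ 2 * (s * l) := by
    have hptwise : ∀ x, |2 * w x * deriv w x * (v1 x * v2 x)|
        ≤ 2 * (|w x * v2 x| * |v1 x|) := by
      intro x
      have h1 := hw' x
      have h2 : |2 * w x * deriv w x * (v1 x * v2 x)|
          = 2 * (|w x * v2 x| * |v1 x|) * |deriv w x| := by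
        rw [_root_.abs_mul, _root_.abs_mul, _root_.abs_mul, _root_.abs_mul, _root_.abs_mul]
        norm_num
        ring
      rw [h2]
      calc 2 * (|w x * v2 x| * |v1 x|) * |deriv w x| ≤ 2 * (|w x * v2 x| * |v1 x|) * 1 :=
            mul_le_mul_of_nonneg_left h1 (by positivity)
      _ = 2 * (|w x * v2 x| * |v1 x|) := by ring
    have hrhs_int : Integrable (fun x => 2 * (|w x * v2 x| * |v1 x|)) volume := by
      have h : (fun x => 2 * (|w x * v2 x| * |v1 x|))
          = fun x => (2 * |w x * v2 x|) * |v1 x| := by ext x; ring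
      rw [h]
      obtain ⟨C2, hC2⟩ := schwartz_bound v2
      refine bdd_mul_integrable (by fun_prop) (C := 2 * (B * C2)) (fun x => ?_)
        v1.integrable.abs
      rw [_root_.abs_mul, _root_.abs_abs, _root_.abs_mul]
      have : |w x| * |v2 x| ≤ B * C2 :=
        mul_le_mul (hwabs x) (hC2 x) (_root_.abs_nonneg _) hB0
      calc |(2:ℝ)| * (|w x| * |v2 x|) = 2 * (|w x| * |v2 x|) := by norm_num
      _ ≤ 2 * (B * C2) := by linarith
    have h1 : |T1| ≤ ∫ x, |2 * w x * deriv w x * (v1 x * v2 x)| := by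
      have h0 := norm_integral_le_integral_norm (fun x => 2 * w x * deriv w x * (v1 x * v2 x))
        (μ := volume)
      simp only [Real.norm_eq_abs] at h0
      exact h0
    have h2 : ∫ x, |2 * w x * deriv w x * (v1 x * v2 x)|
        ≤ ∫ x, 2 * (|w x * v2 x| * |v1 x|) :=
      integral_mono (hG1int.abs) hrhs_int hptwise
    have h3 : ∫ x, 2 * (|w x * v2 x| * |v1 x|) = 2 * ∫ x, |w x * v2 x| * |v1 x| := by
      rw [← integral_const_mul]
    have h4 : ∫ x, |w x * v2 x| * |v1 x| ≤ s * l := by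
      have := cs_abs hm_wv2 hm_v1
      rwa [← hIdef, ← hsdef, ← hldef] at this
    calc |T1| ≤ ∫ x, 2 * (|w x * v2 x| * |v1 x|) := h1.trans h2
    _ = 2 * ∫ x, |w x * v2 x| * |v1 x| := h3
    _ ≤ 2 * (s * l) := by linarith
  -- the real inequality
  have hreal : I ≤ 4 * (a * b + l ^ 2) := by
    have hI_le : I ≤ |T1| + |J| := by
      have hIeq : I = -T1 - J := by linarith
      rw [hIeq]
      linarith [_root_.neg_abs_le T1, _root_.neg_abs_le J]
    have hyoung : 2 * (s * l) ≤ s ^ 2 / 2 + 2 * l ^ 2 := by nlinarith [sq_nonneg (s - 2 * l)]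
    nlinarith [mul_nonneg ha0 hb0]
  -- convert to eLpNorm form
  rw [h2, h3, ← e1]
  rw [elpnorm_sq_eq hm_wv2, elpnorm_eq hm_w2v1, elpnorm_eq hm_v3, elpnorm_sq_eq hm_v1]
  have hl2 : ENNReal.ofReal (∫ x, v1 x ^ 2) = ENNReal.ofReal (l ^ 2) := by
    congr 1
    rw [hldef, ← Real.rpow_natCast ((∫ x, v1 x ^ 2) ^ (1/2:ℝ)) 2,
      ← Real.rpow_mul (integral_nonneg fun x => sq_nonneg _)]
    norm_num
  rw [hl2, ← ENNReal.ofReal_mul ha0, ← ENNReal.ofReal_add (mul_nonneg ha0 hb0) (sq_nonneg l),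
    ← ENNReal.ofReal_mul (by norm_num : (0:ℝ) ≤ 4)]
  exact ENNReal.ofReal_le_ofReal hreal
end
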